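/- arXiv:cs/0605017 — 4 statements merged into one kernel-verified Lean document; each statement's English description precedes it below -/
import Mathlib

section
/- Let s be a state, δ an a-state with δ ⊆ s, and a a non-sensing action executable in δ. Then for every state s' ∈ Res^c_D(a, s), s' ∖ (e(a, s) ∪ (s ∩ s')) ⊆ pc(a, δ). -/
noncomputable section
attribute [local instance] Classical.propDecidable

/-- A literal over the set of fluents `F`: a fluent together with a sign
(`true` for the fluent `f` itself, `false` for its negation `¬f`). -/
abbrev Lit (F : Type) : Type := F × Bool

/-- The complement `¬l` of a literal `l` (so that `¬¬f = f`). -/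
def Lit.compl {F : Type} (l : Lit F) : Lit F := (l.1, !l.2)

/-- `¬γ = {¬l | l ∈ γ}`. -/
def negLits {F : Type} (γ : Set (Lit F)) : Set (Lit F) := Lit.compl '' γ

/-- A set of literals is consistent if it contains no complementary pair. -/
def ConsistentLits {F : Type} (σ : Set (Lit F)) : Prop :=
  ∀ l : Lit F, ¬(l ∈ σ ∧ Lit.compl l ∈ σ)

/-- A static causal law `if(head, body)`: the body is a finite nonempty set of literals. -/
structure StaticLaw (F : Type) where
  head : Lit F
  body : Finset (Lit F)
  body_nonempty : body.Nonempty

/-- A set of literals `σ` satisfies the static causal law `r` if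
`body ⊆ σ` implies `head ∈ σ`. -/
def SatLaw {F : Type} (σ : Set (Lit F)) (r : StaticLaw F) : Prop :=
  ↑r.body ⊆ σ → r.head ∈ σ

/-- `σ` satisfies every static causal law in `D`. -/
def ClosedUnder {F : Type} (D : Set (StaticLaw F)) (σ : Set (Lit F)) : Prop :=
  ∀ r ∈ D, SatLaw σ r

/-- `Cl D σ`: the smallest set of literals containing `σ` and satisfying every
static causal law in `D`. -/
def Cl {F : Type} (D : Set (StaticLaw F)) (σ : Set (Lit F)) : Set (Lit F) :=
  ⋂₀ {τ | σ ⊆ τ ∧ ClosedUnder D τ}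

/-- An interpretation: for each fluent exactly one of `f`, `¬f` belongs to it
(complete and consistent). -/
def Interp {F : Type} (σ : Set (Lit F)) : Prop :=
  ∀ f : F, (((f, true) : Lit F) ∈ σ ∨ ((f, false) : Lit F) ∈ σ) ∧
    ¬(((f, true) : Lit F) ∈ σ ∧ ((f, false) : Lit F) ∈ σ)

/-- A state: an interpretation satisfying all static causal laws in `D`. -/
def IsState {F : Type} (D : Set (StaticLaw F)) (s : Set (Lit F)) : Prop :=
  Interp s ∧ ClosedUnder D s

/-- An a-state: a consistent set of literals satisfying all static causal laws in `D`. -/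
def AState {F : Type} (D : Set (StaticLaw F)) (δ : Set (Lit F)) : Prop :=
  ConsistentLits δ ∧ ClosedUnder D δ

/-- A set of literals is valid if it is contained in some state. -/
def ValidA {F : Type} (D : Set (StaticLaw F)) (δ : Set (Lit F)) : Prop :=
  ∃ s, IsState D s ∧ δ ⊆ s

/-- A domain description: executability conditions `executable(a, ψ)`,
dynamic causal laws `causes(a, l, φ)`, static causal laws `if(l, φ)`, and
k-propositions `determines(a, θ)`. -/
structure ActionDom (F A : Type) where
  execs : Set (A × Finset (Lit F))
  dyn : Set (A × Lit F × Finset (Lit F))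
  stat : Set (StaticLaw F)
  kprops : Set (A × Finset (Lit F))

namespace ActionDom

variable {F A : Type}

/-- A non-sensing action: one occurring in a dynamic causal law. -/
def NonSensing (D : ActionDom F A) (a : A) : Prop := ∃ l φ, (a, l, φ) ∈ D.dyn

/-- A sensing action: one occurring in a k-proposition. -/
def Sensing (D : ActionDom F A) (a : A) : Prop := ∃ θ, (a, θ) ∈ D.kprops

/-- Structural conditions on a domain description: all components are finite,
every k-proposition senses at least two literals, non-sensing and sensing actions
are disjoint, and each sensing action occurs in at most one k-proposition. -/
structure WellFormed (D : ActionDom F A) : Prop where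
  execs_finite : D.execs.Finite
  dyn_finite : D.dyn.Finite
  stat_finite : D.stat.Finite
  kprops_finite : D.kprops.Finite
  kprops_card : ∀ p ∈ D.kprops, 2 ≤ p.2.card
  sensing_disjoint : ∀ a : A, ¬(D.NonSensing a ∧ D.Sensing a)
  kprops_unique : ∀ a θ₁ θ₂, (a, θ₁) ∈ D.kprops → (a, θ₂) ∈ D.kprops → θ₁ = θ₂

/-- `a` is executable in `σ`: some `executable(a, ψ)` of `D` has `ψ ⊆ σ`. -/
def Executable (D : ActionDom F A) (a : A) (σ : Set (Lit F)) : Prop :=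
  ∃ ψ, (a, ψ) ∈ D.execs ∧ ↑ψ ⊆ σ

/-- `E(a, σ) = {l | D contains causes(a, l, φ) with φ ⊆ σ}`. -/
def Eff (D : ActionDom F A) (a : A) (σ : Set (Lit F)) : Set (Lit F) :=
  {l | ∃ φ, (a, l, φ) ∈ D.dyn ∧ ↑φ ⊆ σ}

/-- `e(a, σ) = Cl_D(E(a, σ))`. -/
def eEff (D : ActionDom F A) (a : A) (σ : Set (Lit F)) : Set (Lit F) :=
  Cl D.stat (D.Eff a σ)

/-- The possible-next-states function
`Res^c_D(a, s) = {s' | s' is a state and s' = Cl_D(E(a,s) ∪ (s ∩ s'))}`. -/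
def ResC (D : ActionDom F A) (a : A) (s : Set (Lit F)) : Set (Set (Lit F)) :=
  {s' | IsState D.stat s' ∧ s' = Cl D.stat (D.Eff a s ∪ (s ∩ s'))}

/-- A consistent domain description: `Res^c_D(a, s) ≠ ∅` for every state `s` and
action `a` executable in `s`. -/
def ConsistentDom (D : ActionDom F A) : Prop :=
  ∀ s a, IsState D.stat s → D.Executable a s → (D.ResC a s).Nonempty

/-- `pc^i(a, δ)`. -/
def pcIter (D : ActionDom F A) (a : A) (δ : Set (Lit F)) : ℕ → Set (Lit F)
  | 0 => {l | ∃ φ, (a, l, φ) ∈ D.dyn ∧ l ∉ δ ∧ negLits ↑φ ∩ δ = ∅}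
  | i + 1 => D.pcIter a δ i ∪
      {l | ∃ r ∈ D.stat, r.head = l ∧ l ∉ δ ∧ (↑r.body ∩ D.pcIter a δ i).Nonempty ∧
        negLits ↑r.body ∩ D.eEff a δ = ∅}

/-- `pc(a, δ) = ⋃_{i ≥ 0} pc^i(a, δ)`. -/
def pc (D : ActionDom F A) (a : A) (δ : Set (Lit F)) : Set (Lit F) :=
  ⋃ i, D.pcIter a δ i

/-- `Cl_D(e(a, δ) ∪ (δ ∖ ¬pc(a, δ)))`, the candidate next a-state after a
non-sensing action. -/
def nsNext (D : ActionDom F A) (a : A) (δ : Set (Lit F)) : Set (Lit F) :=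
  Cl D.stat (D.eEff a δ ∪ (δ \ negLits (D.pc a δ)))

/-- The 0-result function `Res_D(a, δ)` (for `a` executable in `δ`): for a sensing
action with k-proposition `determines(a, θ)`, the consistent sets `Cl_D(δ ∪ {g})`,
`g ∈ θ`; for a non-sensing action, `{Cl_D(e(a,δ) ∪ (δ ∖ ¬pc(a,δ)))}` if consistent,
and `∅` otherwise. -/
def Res (D : ActionDom F A) (a : A) (δ : Set (Lit F)) : Set (Set (Lit F)) :=
  if D.Sensing a then
    {δ' | ∃ θ, (a, θ) ∈ D.kprops ∧ ∃ g ∈ θ, δ' = Cl D.stat (δ ∪ {g}) ∧ ConsistentLits δ'}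
  else
    {δ' | δ' = D.nsNext a δ ∧ ConsistentLits δ'}

/-- The transition function: `⊥` (i.e. `none`) if `a` is not executable in `δ`,
and `Res_D(a, δ)` otherwise. -/
def Phi (D : ActionDom F A) (a : A) (δ : Set (Lit F)) : Option (Set (Set (Lit F))) :=
  if D.Executable a δ then some (D.Res a δ) else none

/-- The assumption that for every k-proposition `determines(a, θ)` of `D`,
in every state exactly one literal of `θ` holds. -/
def OneOfAssumption (D : ActionDom F A) : Prop :=
  ∀ a θ, (a, θ) ∈ D.kprops → ∀ s, IsState D.stat s → ∃! g : Lit F, g ∈ θ ∧ g ∈ s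

end ActionDom

lemma subset_Cl {F : Type} (D : Set (StaticLaw F)) (X : Set (Lit F)) : X ⊆ Cl D X :=
  fun _ hl => Set.mem_sInter.mpr (fun _ hτ => hτ.1 hl)

lemma Cl_min {F : Type} {D : Set (StaticLaw F)} {X τ : Set (Lit F)}
    (h1 : X ⊆ τ) (h2 : ClosedUnder D τ) : Cl D X ⊆ τ :=
  fun _ hl => Set.mem_sInter.mp hl τ ⟨h1, h2⟩

lemma Cl_closed {F : Type} (D : Set (StaticLaw F)) (X : Set (Lit F)) :
    ClosedUnder D (Cl D X) := by
  intro r hr hbody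
  refine Set.mem_sInter.mpr (fun τ hτ => hτ.2 r hr (fun m hm => ?_))
  exact Set.mem_sInter.mp (hbody hm) τ hτ

lemma Cl_mono {F : Type} {D : Set (StaticLaw F)} {X Y : Set (Lit F)} (h : X ⊆ Y) :
    Cl D X ⊆ Cl D Y :=
  Cl_min (h.trans (subset_Cl D Y)) (Cl_closed D Y)

lemma interp_consistent {F : Type} {σ : Set (Lit F)} (h : Interp σ) : ConsistentLits σ := by
  rintro ⟨f, b⟩ ⟨h1, h2⟩
  cases b
  · exact (h f).2 ⟨h2, h1⟩
  · exact (h f).2 ⟨h1, h2⟩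

/-- For a state `s`, an a-state `δ ⊆ s`, and a non-sensing action `a` executable in `δ`:
for every `s' ∈ Res^c_D(a,s)`, `s' ∖ (e(a,s) ∪ (s ∩ s')) ⊆ pc(a,δ)`. -/
theorem resC_diff_subset_pc
    {F A : Type} [Finite F] [Finite A]
    (D : ActionDom F A) (hD : D.WellFormed)
    (s δ : Set (Lit F)) (hs : IsState D.stat s) (hδ : AState D.stat δ) (hsub : δ ⊆ s)
    (a : A) (ha : D.NonSensing a) (hexec : D.Executable a δ) :
    ∀ s' ∈ D.ResC a s, s' \ (D.eEff a s ∪ (s ∩ s')) ⊆ D.pc a δ := by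
  intro s' hs'
  obtain ⟨hstate', heq⟩ := hs'
  have hconsS : ConsistentLits s := interp_consistent hs.1
  have hcons' : ConsistentLits s' := interp_consistent hstate'.1
  set X : Set (Lit F) := D.Eff a s ∪ (s ∩ s') with hX
  have hXs' : X ⊆ s' := by rw [heq]; exact subset_Cl _ _
  have hEδ : D.Eff a δ ⊆ D.Eff a s := by
    rintro l ⟨φ, hφ, hsub'⟩
    exact ⟨φ, hφ, hsub'.trans hsub⟩
  have heδs' : D.eEff a δ ⊆ s' := by
    rw [heq]
    exact (Cl_mono hEδ).trans (Cl_mono (Set.subset_union_left))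
  -- the key closed superset
  set T : Set (Lit F) := (s ∪ D.pc a δ) ∩ s' with hT
  have hXT : X ⊆ T := by
    rintro l (hl | hl)
    · refine ⟨?_, hXs' (Or.inl hl)⟩
      by_cases hls : l ∈ s
      · exact Or.inl hls
      · refine Or.inr (Set.mem_iUnion.mpr ⟨0, ?_⟩)
        obtain ⟨φ, hφ, hφs⟩ := hl
        refine ⟨φ, hφ, fun hlδ => hls (hsub hlδ), ?_⟩
        ext x
        simp only [Set.mem_inter_iff, Set.mem_empty_iff_false, iff_false, not_and]
        rintro ⟨m, hm, rfl⟩ hxδ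
        exact hconsS m ⟨hφs hm, hsub hxδ⟩
    · exact ⟨Or.inl hl.1, hl.2⟩
  have hTclosed : ClosedUnder D.stat T := by
    intro r hr hbody
    have hbody' : ↑r.body ⊆ s' := fun m hm => (hbody hm).2
    have hheads' : r.head ∈ s' := hstate'.2 r hr hbody'
    by_cases hhs : r.head ∈ s
    · exact ⟨Or.inl hhs, hheads'⟩
    · by_cases hbs : ↑r.body ⊆ s
      · exact absurd (hs.2 r hr hbs) hhs
      · obtain ⟨m, hmb, hms⟩ := Set.not_subset.mp hbs
        have hmpc : m ∈ D.pc a δ := by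
          rcases (hbody hmb).1 with h | h
          · exact absurd h hms
          · exact h
        obtain ⟨_, ⟨i, rfl⟩, hmi⟩ := hmpc
        refine ⟨Or.inr (Set.mem_iUnion.mpr ⟨i + 1, Or.inr ?_⟩), hheads'⟩
        refine ⟨r, hr, rfl, fun hδ => hhs (hsub hδ), ⟨m, hmb, hmi⟩, ?_⟩
        ext x
        simp only [Set.mem_inter_iff, Set.mem_empty_iff_false, iff_false, not_and]
        rintro ⟨m', hm', rfl⟩ hxe
        exact hcons' m' ⟨hbody' hm', heδs' hxe⟩
  have hs'T : s' ⊆ T := by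
    nth_rewrite 1 [heq]
    exact Cl_min hXT hTclosed
  intro l hl
  obtain ⟨hl', hlnot⟩ := hl
  rcases (hs'T hl').1 with h | h
  · exact absurd (Or.inr ⟨h, hl'⟩) hlnot
  · exact h

end
end

section
/- Let G be a nonempty finite set of literals (the goal), δ an a-state, and p a conditional plan with Φ̂(p, δ) ≠ ⊥. If G ⊆ δ' for every δ' ∈ Φ̂(p, δ), then Φ̂(reduct_δ(p), δ) ≠ ⊥ and G ⊆ δ'' for every δ'' ∈ Φ̂(reduct_δ(p), δ). -/
noncomputable section
attribute [local instance] Classical.propDecidable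

/-- Conditional plans: the empty plan `[]`; `[a; p]` for a (non-sensing) action `a`;
and `[a; cases({g → cont g})]` for a (sensing) action `a`, where `cont` assigns a
sub-plan to each sensed literal. -/
inductive CondPlan (F A : Type) : Type where
  | nil : CondPlan F A
  | seq : A → CondPlan F A → CondPlan F A
  | branch : A → (Lit F → CondPlan F A) → CondPlan F A

/-- Well-formed conditional plans of a domain: `seq` uses non-sensing actions and
`branch` uses sensing actions. -/
def IsPlan {F A : Type} (D : ActionDom F A) : CondPlan F A → Prop
  | .nil => True
  | .seq a p => D.NonSensing a ∧ IsPlan D p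
  | .branch a cont => D.Sensing a ∧ ∀ g : Lit F, IsPlan D (cont g)

/-- The extended transition function `Φ̂`: maps a conditional plan and an a-state to a
set of a-states, or `none` (representing `⊥`, which absorbs unions). -/
def PhiHat {F A : Type} (D : ActionDom F A) :
    CondPlan F A → Set (Lit F) → Option (Set (Set (Lit F)))
  | .nil, δ => some {δ}
  | .seq a q, δ =>
    match D.Phi a δ with
    | none => none
    | some S =>
      if ∀ δ' ∈ S, (PhiHat D q δ').isSome then
        some (⋃ δ' ∈ S, (PhiHat D q δ').getD ∅)
      else none
  | .branch a cont, δ =>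
    match D.Phi a δ with
    | none => none
    | some S =>
      if ∀ g : Lit F, ∀ δ' ∈ S, (∃ θ, (a, θ) ∈ D.kprops ∧ g ∈ θ) → g ∈ δ' →
          (PhiHat D (cont g) δ').isSome then
        some (⋃ g : Lit F, ⋃ δ' ∈ S,
          ⋃ (_ : (∃ θ, (a, θ) ∈ D.kprops ∧ g ∈ θ) ∧ g ∈ δ'),
            (PhiHat D (cont g) δ').getD ∅)
      else none

/-- The reduct of a plan with respect to an a-state `δ` and a goal `G`. -/
def reduct {F A : Type} (D : ActionDom F A) (G : Finset (Lit F)) :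
    CondPlan F A → Set (Lit F) → CondPlan F A
  | .nil, _ => .nil
  | .seq a q, δ =>
    if ↑G ⊆ δ then .nil
    else if h : ∃ δ' : Set (Lit F), D.Phi a δ = some {δ'} then
      .seq a (reduct D G q h.choose)
    else .seq a .nil
  | .branch a cont, δ =>
    if ↑G ⊆ δ then .nil
    else if h : ∃ g : Lit F, (∃ θ, (a, θ) ∈ D.kprops ∧ g ∈ θ) ∧ g ∈ δ then
      reduct D G (cont h.choose) δ
    else
      .branch a (fun g =>
        if ConsistentLits (Cl D.stat (δ ∪ {g})) then
          reduct D G (cont g) (Cl D.stat (δ ∪ {g}))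
        else .nil)


/-! The reduct is proved to achieve the goal in a stronger form, by induction on the plan: the reduct
computed at an a-state `τ` achieves the goal from every larger a-state `δ ⊇ τ` from which the plan
itself achieves it. The generalisation is forced by `Φ̂`, which runs the sub-plan of a sensed literal
`g` from every outcome `Cl(δ ∪ {g'})` containing `g`, and such an outcome only contains
`Cl(δ ∪ {g})`. It goes through because a non-sensing step is monotone in the a-state: the effects
`e(a, δ)` grow and the possible changes `pc(a, δ)` shrink as `δ` grows, so the successor
`Cl(e(a, δ) ∪ (δ ∖ ¬pc(a, δ)))` grows. -/

theorem Option.exists_eq_some_and_iff {α : Type*} {o : Option (Set α)} {Q : α → Prop} :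
    (∃ S, o = some S ∧ ∀ x ∈ S, Q x) ↔ o.isSome ∧ ∀ x ∈ o.getD ∅, Q x := by
  cases o <;> simp

section Closure

variable {F : Type} {D : Set (StaticLaw F)} {σ τ : Set (Lit F)}

theorem subset_Cl_s12 : σ ⊆ Cl D σ :=
  fun _ hl => Set.mem_sInter.mpr fun _ hτ => hτ.1 hl

theorem Cl_subset_of_closedUnder (h : σ ⊆ τ) (hτ : ClosedUnder D τ) : Cl D σ ⊆ τ :=
  Set.sInter_subset_of_mem ⟨h, hτ⟩

theorem closedUnder_Cl : ClosedUnder D (Cl D σ) := fun r hr hbody =>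
  Set.mem_sInter.mpr fun _ hτ => hτ.2 r hr (hbody.trans (Set.sInter_subset_of_mem hτ))

theorem Cl_mono_s12 (h : σ ⊆ τ) : Cl D σ ⊆ Cl D τ :=
  Cl_subset_of_closedUnder (h.trans subset_Cl_s12) closedUnder_Cl

theorem Cl_eq_self (h : ClosedUnder D σ) : Cl D σ = σ :=
  (Cl_subset_of_closedUnder subset_rfl h).antisymm subset_Cl_s12

theorem ConsistentLits.subset (hτ : ConsistentLits τ) (h : σ ⊆ τ) : ConsistentLits σ :=
  fun l hl => hτ l ⟨h hl.1, h hl.2⟩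

theorem aState_Cl (h : ConsistentLits (Cl D σ)) : AState D (Cl D σ) :=
  ⟨h, closedUnder_Cl⟩

end Closure

namespace ActionDom

variable {F A : Type} {D : ActionDom F A} {a : A} {δ δ' σ : Set (Lit F)}

theorem Eff_mono (h : δ ⊆ δ') : D.Eff a δ ⊆ D.Eff a δ' :=
  fun _ ⟨φ, hφ, hφδ⟩ => ⟨φ, hφ, hφδ.trans h⟩

theorem eEff_mono (h : δ ⊆ δ') : D.eEff a δ ⊆ D.eEff a δ' :=
  Cl_mono_s12 (Eff_mono h)

theorem pcIter_anti (h : δ ⊆ δ') (i : ℕ) : D.pcIter a δ' i ⊆ D.pcIter a δ i := by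
  induction i with
  | zero =>
    rintro l ⟨φ, hφ, hlδ', hφδ'⟩
    exact ⟨φ, hφ, fun hlδ => hlδ' (h hlδ),
      Set.subset_empty_iff.mp (hφδ' ▸ Set.inter_subset_inter_right _ h)⟩
  | succ i ih =>
    rintro l (hl | ⟨r, hr, rfl, hlδ', ⟨x, hxr, hxpc⟩, hre⟩)
    · exact Or.inl (ih hl)
    · exact Or.inr ⟨r, hr, rfl, fun hlδ => hlδ' (h hlδ), ⟨x, hxr, ih hxpc⟩,
        Set.subset_empty_iff.mp (hre ▸ Set.inter_subset_inter_right _ (eEff_mono h))⟩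

theorem pc_anti (h : δ ⊆ δ') : D.pc a δ' ⊆ D.pc a δ :=
  Set.iUnion_mono (pcIter_anti h)

theorem nsNext_mono (h : δ ⊆ δ') : D.nsNext a δ ⊆ D.nsNext a δ' :=
  Cl_mono_s12 <| Set.union_subset_union (eEff_mono h) <|
    Set.sdiff_subset_sdiff h (Set.image_mono (pc_anti h))

theorem mem_Res_of_not_sensing (ha : ¬D.Sensing a) :
    σ ∈ D.Res a δ ↔ σ = D.nsNext a δ ∧ ConsistentLits σ := by
  rw [Res, if_neg ha]
  rfl

theorem mem_Res_of_sensing (ha : D.Sensing a) :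
    σ ∈ D.Res a δ ↔ ∃ θ, (a, θ) ∈ D.kprops ∧ ∃ g ∈ θ,
      σ = Cl D.stat (δ ∪ {g}) ∧ ConsistentLits σ := by
  rw [Res, if_pos ha]
  rfl

theorem aState_of_mem_Res (h : σ ∈ D.Res a δ) : AState D.stat σ := by
  by_cases ha : D.Sensing a
  · obtain ⟨_, _, _, _, rfl, hc⟩ := (mem_Res_of_sensing ha).mp h
    exact aState_Cl hc
  · obtain ⟨rfl, hc⟩ := (mem_Res_of_not_sensing ha).mp h
    exact aState_Cl hc

theorem subset_of_mem_Res_of_sensing (ha : D.Sensing a) (h : σ ∈ D.Res a δ) : δ ⊆ σ := by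
  obtain ⟨_, _, _, _, rfl, _⟩ := (mem_Res_of_sensing ha).mp h
  exact Set.subset_union_left.trans subset_Cl_s12

theorem Cl_union_singleton_mem_Res {g : Lit F} (hg : ∃ θ, (a, θ) ∈ D.kprops ∧ g ∈ θ)
    (hc : ConsistentLits (Cl D.stat (δ ∪ {g}))) : Cl D.stat (δ ∪ {g}) ∈ D.Res a δ :=
  let ⟨θ, hθ, hgθ⟩ := hg
  (mem_Res_of_sensing ⟨θ, hθ⟩).mpr ⟨θ, hθ, g, hgθ, rfl, hc⟩

theorem self_mem_Res {g : Lit F} (hδ : AState D.stat δ)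
    (hg : ∃ θ, (a, θ) ∈ D.kprops ∧ g ∈ θ) (hgδ : g ∈ δ) : δ ∈ D.Res a δ := by
  have hδg : Cl D.stat (δ ∪ {g}) = δ := by
    rw [Set.union_singleton, Set.insert_eq_of_mem hgδ, Cl_eq_self hδ.2]
  have hmem := Cl_union_singleton_mem_Res hg (hδg ▸ hδ.1)
  rwa [hδg] at hmem

theorem Phi_eq_singleton_nsNext (ha : ¬D.Sensing a) (he : D.Executable a δ)
    (hc : ConsistentLits (D.nsNext a δ)) : D.Phi a δ = some {D.nsNext a δ} := by
  rw [Phi, if_pos he, Set.eq_singleton_iff_unique_mem.mpr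
    ⟨(mem_Res_of_not_sensing ha).mpr ⟨rfl, hc⟩, fun _ h => ((mem_Res_of_not_sensing ha).mp h).1⟩]

variable (D) in
def Achieves (G : Finset (Lit F)) (p : CondPlan F A) (δ : Set (Lit F)) : Prop :=
  ∃ S, PhiHat D p δ = some S ∧ ∀ δ' ∈ S, ↑G ⊆ δ'

variable {G : Finset (Lit F)}

theorem achieves_nil : D.Achieves G .nil δ ↔ ↑G ⊆ δ := by
  simp [Achieves, PhiHat]

theorem achieves_seq {q : CondPlan F A} :
    D.Achieves G (.seq a q) δ ↔ D.Executable a δ ∧ ∀ σ ∈ D.Res a δ, D.Achieves G q σ := by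
  simp only [Achieves, Option.exists_eq_some_and_iff]
  by_cases he : D.Executable a δ
  · rw [PhiHat, Phi, if_pos he]
    by_cases h : ∀ σ ∈ D.Res a δ, (PhiHat D q σ).isSome
    · simp only [if_pos h, Option.isSome_some, Option.getD_some, Set.mem_iUnion₂]
      grind
    · simp only [if_neg h]
      grind
  · simp [PhiHat, Phi, he]

theorem achieves_branch {cont : Lit F → CondPlan F A} :
    D.Achieves G (.branch a cont) δ ↔ D.Executable a δ ∧ ∀ g, ∀ σ ∈ D.Res a δ,
      (∃ θ, (a, θ) ∈ D.kprops ∧ g ∈ θ) → g ∈ σ → D.Achieves G (cont g) σ := by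
  simp only [Achieves, Option.exists_eq_some_and_iff]
  by_cases he : D.Executable a δ
  · rw [PhiHat, Phi, if_pos he]
    by_cases h : ∀ g, ∀ σ ∈ D.Res a δ, (∃ θ, (a, θ) ∈ D.kprops ∧ g ∈ θ) → g ∈ σ →
        (PhiHat D (cont g) σ).isSome
    · simp only [if_pos h, Option.isSome_some, Option.getD_some, Set.mem_iUnion]
      grind
    · simp only [if_neg h]
      grind
  · simp [PhiHat, Phi, he]

theorem achieves_reduct_seq {τ : Set (Lit F)} {q : CondPlan F A} (ha : ¬D.Sensing a)
    (ih : ∀ {τ δ : Set (Lit F)}, AState D.stat τ → AState D.stat δ → τ ⊆ δ →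
      D.Achieves G q τ → D.Achieves G q δ → D.Achieves G (reduct D G q τ) δ)
    (hsub : τ ⊆ δ) (hτq : D.Achieves G (.seq a q) τ) (hδq : D.Achieves G (.seq a q) δ) :
    D.Achieves G (reduct D G (.seq a q) τ) δ := by
  obtain ⟨heτ, hτq⟩ := achieves_seq.mp hτq
  obtain ⟨heδ, hδq⟩ := achieves_seq.mp hδq
  have hsucc : ∀ σ ∈ D.Res a δ, D.nsNext a τ ⊆ σ ∧ ConsistentLits (D.nsNext a τ) :=
    fun σ hσ =>
      have hle := ((mem_Res_of_not_sensing ha).mp hσ).1 ▸ nsNext_mono hsub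
      ⟨hle, (aState_of_mem_Res hσ).1.subset hle⟩
  rw [reduct]
  split_ifs with hGτ h
  · exact achieves_nil.mpr (hGτ.trans hsub)
  · refine achieves_seq.mpr ⟨heδ, fun σ hσ => ?_⟩
    obtain ⟨hle, hcons⟩ := hsucc σ hσ
    have hchoose : h.choose = D.nsNext a τ := Set.singleton_injective <| Option.some_injective _ <|
      h.choose_spec.symm.trans (Phi_eq_singleton_nsNext ha heτ hcons)
    have hmem : D.nsNext a τ ∈ D.Res a τ := (mem_Res_of_not_sensing ha).mpr ⟨rfl, hcons⟩
    rw [hchoose]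
    exact ih (aState_of_mem_Res hmem) (aState_of_mem_Res hσ) hle (hτq _ hmem) (hδq σ hσ)
  · exact achieves_seq.mpr ⟨heδ, fun σ hσ =>
      absurd ⟨_, Phi_eq_singleton_nsNext ha heτ (hsucc σ hσ).2⟩ h⟩

theorem achieves_reduct_branch {τ : Set (Lit F)} {cont : Lit F → CondPlan F A}
    (ih : ∀ g {τ δ : Set (Lit F)}, AState D.stat τ → AState D.stat δ → τ ⊆ δ →
      D.Achieves G (cont g) τ → D.Achieves G (cont g) δ → D.Achieves G (reduct D G (cont g) τ) δ)
    (hτ : AState D.stat τ) (hδ : AState D.stat δ) (hsub : τ ⊆ δ)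
    (hτp : D.Achieves G (.branch a cont) τ) (hδp : D.Achieves G (.branch a cont) δ) :
    D.Achieves G (reduct D G (.branch a cont) τ) δ := by
  obtain ⟨-, hτc⟩ := achieves_branch.mp hτp
  obtain ⟨heδ, hδc⟩ := achieves_branch.mp hδp
  rw [reduct]
  split_ifs with hGτ h
  · exact achieves_nil.mpr (hGτ.trans hsub)
  · obtain ⟨hg, hgτ⟩ := h.choose_spec
    exact ih _ hτ hδ hsub (hτc _ τ (self_mem_Res hτ hg hgτ) hg hgτ)
      (hδc _ δ (self_mem_Res hδ hg (hsub hgτ)) hg (hsub hgτ))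
  · refine achieves_branch.mpr ⟨heδ, fun g σ hσ hg hgσ => ?_⟩
    have hσst := aState_of_mem_Res hσ
    have hclσ : Cl D.stat (τ ∪ {g}) ⊆ σ := Cl_subset_of_closedUnder
      (Set.union_subset (hsub.trans (subset_of_mem_Res_of_sensing ⟨_, hg.choose_spec.1⟩ hσ))
        (Set.singleton_subset_iff.mpr hgσ)) hσst.2
    have hc : ConsistentLits (Cl D.stat (τ ∪ {g})) := hσst.1.subset hclσ
    rw [if_pos hc]
    exact ih g (aState_Cl hc) hσst hclσ
      (hτc g _ (Cl_union_singleton_mem_Res hg hc) hg (subset_Cl_s12 (Or.inr rfl))) (hδc g σ hσ hg hgσ)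

theorem achieves_reduct_of_subset (hD : D.WellFormed) {p : CondPlan F A} (hp : IsPlan D p)
    {τ : Set (Lit F)} (hτ : AState D.stat τ) (hδ : AState D.stat δ) (hsub : τ ⊆ δ)
    (hτp : D.Achieves G p τ) (hδp : D.Achieves G p δ) :
    D.Achieves G (reduct D G p τ) δ := by
  induction p generalizing τ δ with
  | nil => exact hδp
  | seq a q ih =>
    exact achieves_reduct_seq (fun hs => hD.sensing_disjoint a ⟨hp.1, hs⟩)
      (ih hp.2) hsub hτp hδp
  | branch a cont ih => exact achieves_reduct_branch (fun g => ih g (hp.2 g)) hτ hδ hsub hτp hδp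

end ActionDom

theorem reduct_preserves_goal_general
    {F A : Type}
    (D : ActionDom F A) (hD : D.WellFormed)
    (G : Finset (Lit F))
    (δ : Set (Lit F)) (hδ : AState D.stat δ)
    (p : CondPlan F A) (hp : IsPlan D p)
    (S : Set (Set (Lit F))) (hS : PhiHat D p δ = some S)
    (hgoal : ∀ δ' ∈ S, ↑G ⊆ δ') :
    ∃ S' : Set (Set (Lit F)), PhiHat D (reduct D G p δ) δ = some S' ∧
      ∀ δ'' ∈ S', ↑G ⊆ δ'' :=
  ActionDom.achieves_reduct_of_subset hD hp hδ hδ subset_rfl ⟨S, hS, hgoal⟩ ⟨S, hS, hgoal⟩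

theorem reduct_preserves_goal
    {F A : Type} [Finite F] [Finite A]
    (D : ActionDom F A) (hD : D.WellFormed) (honeof : D.OneOfAssumption)
    (G : Finset (Lit F)) (hG : G.Nonempty)
    (δ : Set (Lit F)) (hδ : AState D.stat δ)
    (p : CondPlan F A) (hp : IsPlan D p)
    (S : Set (Set (Lit F))) (hS : PhiHat D p δ = some S)
    (hgoal : ∀ δ' ∈ S, ↑G ⊆ δ') :
    ∃ S' : Set (Set (Lit F)), PhiHat D (reduct D G p δ) δ = some S' ∧
      ∀ δ'' ∈ S', ↑G ⊆ δ'' :=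
  reduct_preserves_goal_general D hD G δ hδ p hp S hS hgoal
end
end

section
/- Let Π be a normal logic program that can be divided into two subprograms Π₁ and Π₂ with Π = Π₁ ∪ Π₂ and lit(Π₁) ∩ lit(Π₂) = ∅. Then a set S of atoms is an answer set of Π if and only if there exist sets S₁ and S₂ of atoms such that S = S₁ ∪ S₂, S₁ is an answer set of Π₁, and S₂ is an answer set of Π₂. -/
/-- A rule of a normal logic program: `head ← pos, not neg`. -/
structure NRule (Atom : Type) where
  head : Atom
  pos : Finset Atom
  neg : Finset Atom

/-- The atoms occurring in a rule. -/
def NRule.lits {Atom : Type} (r : NRule Atom) : Set Atom :=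
  {r.head} ∪ ↑r.pos ∪ ↑r.neg

/-- `lit(Π)`: the set of atoms occurring in the program `Π`. -/
def progLits {Atom : Type} (P : Set (NRule Atom)) : Set Atom :=
  ⋃ r ∈ P, r.lits

/-- The Gelfond–Lifschitz reduct `Π^S`: the definite program
`{(head(r), pos(r)) | r ∈ Π and neg(r) ∩ S = ∅}`. -/
def glReduct {Atom : Type} (P : Set (NRule Atom)) (S : Set Atom) :
    Set (Atom × Finset Atom) :=
  {p | ∃ r ∈ P, p = (r.head, r.pos) ∧ ↑r.neg ∩ S = ∅}

/-- `X` is closed under the definite program `Q`. -/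
def DefClosed {Atom : Type} (Q : Set (Atom × Finset Atom)) (X : Set Atom) : Prop :=
  ∀ p ∈ Q, ↑p.2 ⊆ X → p.1 ∈ X

/-- `S` is an answer set of `P`: `S` is the ⊆-least set closed under `P^S`. -/
def AnswerSet {Atom : Type} (P : Set (NRule Atom)) (S : Set Atom) : Prop :=
  DefClosed (glReduct P S) S ∧ ∀ X : Set Atom, DefClosed (glReduct P S) X → S ⊆ X

lemma lits_subset {Atom : Type} {P : Set (NRule Atom)} {r : NRule Atom} (hr : r ∈ P) :
    r.lits ⊆ progLits P := fun a ha => Set.mem_biUnion hr ha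

lemma head_mem_lits {Atom : Type} (r : NRule Atom) : r.head ∈ r.lits := by
  simp [NRule.lits]

lemma pos_subset_lits {Atom : Type} (r : NRule Atom) : (↑r.pos : Set Atom) ⊆ r.lits := by
  intro a ha; simp [NRule.lits]; tauto

lemma neg_subset_lits {Atom : Type} (r : NRule Atom) : (↑r.neg : Set Atom) ⊆ r.lits := by
  intro a ha; simp [NRule.lits]; tauto

lemma answerSet_subset_lits {Atom : Type} {P : Set (NRule Atom)} {S : Set Atom}
    (h : AnswerSet P S) : S ⊆ progLits P := by
  refine h.2 _ ?_
  rintro ⟨hd, B⟩ ⟨r, hr, heq, -⟩ _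
  obtain ⟨rfl, rfl⟩ := Prod.mk.injEq .. ▸ heq
  exact lits_subset hr (head_mem_lits r)

lemma reduct_congr {Atom : Type} {P : Set (NRule Atom)} {S T : Set Atom}
    (h : ∀ r ∈ P, ((↑r.neg ∩ S : Set Atom) = ∅ ↔ (↑r.neg ∩ T : Set Atom) = ∅)) :
    glReduct P S = glReduct P T := by
  ext p
  constructor <;> rintro ⟨r, hr, rfl, hneg⟩
  · exact ⟨r, hr, rfl, (h r hr).1 hneg⟩
  · exact ⟨r, hr, rfl, (h r hr).2 hneg⟩

/-- Key forward lemma: if `S` is an answer set of `P₁ ∪ P₂` with disjoint atoms,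
then `S ∩ progLits P₁` is an answer set of `P₁`. -/
lemma split_part {Atom : Type} {P₁ P₂ : Set (NRule Atom)} {S : Set Atom}
    (hdisj : progLits P₁ ∩ progLits P₂ = ∅)
    (h : AnswerSet (P₁ ∪ P₂) S) : AnswerSet P₁ (S ∩ progLits P₁) := by
  set L₁ := progLits P₁ with hL₁
  set L₂ := progLits P₂ with hL₂
  have hdis : ∀ a, a ∈ L₁ → a ∈ L₂ → False := by
    intro a h1 h2
    have : a ∈ L₁ ∩ L₂ := ⟨h1, h2⟩
    rw [hdisj] at this; exact this
  -- the reduct of P₁ w.r.t. S ∩ L₁ equals the reduct w.r.t. S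
  have hred : glReduct P₁ (S ∩ L₁) = glReduct P₁ S := by
    refine reduct_congr fun r hr => ?_
    constructor <;> intro he
    · ext a; simp only [Set.mem_inter_iff, Set.mem_empty_iff_false, iff_false, not_and]
      intro ha hS
      have : a ∈ (↑r.neg ∩ (S ∩ L₁) : Set Atom) :=
        ⟨ha, hS, lits_subset hr (neg_subset_lits r ha)⟩
      rw [he] at this; exact this
    · ext a; simp only [Set.mem_inter_iff, Set.mem_empty_iff_false, iff_false, not_and]
      intro ha hS hL
      have : a ∈ (↑r.neg ∩ S : Set Atom) := ⟨ha, hS⟩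
      rw [he] at this; exact this
  constructor
  · -- closedness
    rintro ⟨hd, B⟩ hp hB
    rw [hred] at hp
    obtain ⟨r, hr, heq, hneg⟩ := hp
    obtain ⟨rfl, rfl⟩ := Prod.mk.injEq .. ▸ heq
    have hmem : r.head ∈ S := by
      refine h.1 (r.head, r.pos) ⟨r, Or.inl hr, rfl, hneg⟩ ?_
      exact fun a ha => (hB ha).1
    exact ⟨hmem, lits_subset hr (head_mem_lits r)⟩
  · -- minimality
    intro X hX
    rw [hred] at hX
    set Y : Set Atom := (X ∩ L₁) ∪ (S ∩ L₂) with hY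
    have hYclosed : DefClosed (glReduct (P₁ ∪ P₂) S) Y := by
      rintro ⟨hd, B⟩ ⟨r, hr | hr, heq, hneg⟩ hB
      · obtain ⟨rfl, rfl⟩ := Prod.mk.injEq .. ▸ heq
        have hBX : (↑r.pos : Set Atom) ⊆ X := by
          intro a ha
          have haL₁ : a ∈ L₁ := lits_subset hr (pos_subset_lits r ha)
          rcases hB ha with h1 | h2
          · exact h1.1
          · exact absurd h2.2 (fun h2' => hdis a haL₁ h2')
        have : r.head ∈ X := hX (r.head, r.pos) ⟨r, hr, rfl, hneg⟩ hBX
        exact Or.inl ⟨this, lits_subset hr (head_mem_lits r)⟩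
      · obtain ⟨rfl, rfl⟩ := Prod.mk.injEq .. ▸ heq
        have hBS : (↑r.pos : Set Atom) ⊆ S := by
          intro a ha
          have haL₂ : a ∈ L₂ := lits_subset hr (pos_subset_lits r ha)
          rcases hB ha with h1 | h2
          · exact absurd haL₂ (fun h2' => hdis a h1.2 h2')
          · exact h2.1
        have : r.head ∈ S := h.1 (r.head, r.pos) ⟨r, Or.inr hr, rfl, hneg⟩ hBS
        exact Or.inr ⟨this, lits_subset hr (head_mem_lits r)⟩
    have hSY : S ⊆ Y := h.2 Y hYclosed
    rintro a ⟨haS, haL₁⟩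
    rcases hSY haS with h1 | h2
    · exact h1.1
    · exact absurd haL₁ (fun h' => hdis a h' h2.2)

/-- Splitting a normal logic program into two subprograms with disjoint atoms:
`S` is an answer set of `Π = Π₁ ∪ Π₂` iff `S = S₁ ∪ S₂` for answer sets `S₁` of `Π₁`
and `S₂` of `Π₂`. -/
theorem answerSet_union_iff_of_disjoint
    {Atom : Type} (P P₁ P₂ : Set (NRule Atom))
    (hU : P = P₁ ∪ P₂) (hdisj : progLits P₁ ∩ progLits P₂ = ∅)
    (S : Set Atom) :
    AnswerSet P S ↔
      ∃ S₁ S₂ : Set Atom, S = S₁ ∪ S₂ ∧ AnswerSet P₁ S₁ ∧ AnswerSet P₂ S₂ := by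
  subst hU
  have hdisj' : progLits P₂ ∩ progLits P₁ = ∅ := by
    rw [Set.inter_comm]; exact hdisj
  have hdis : ∀ a, a ∈ progLits P₁ → a ∈ progLits P₂ → False := by
    intro a h1 h2
    have : a ∈ progLits P₁ ∩ progLits P₂ := ⟨h1, h2⟩
    rw [hdisj] at this; exact this
  have hLU : progLits (P₁ ∪ P₂) = progLits P₁ ∪ progLits P₂ := by
    simp only [progLits]; exact Set.biUnion_union P₁ P₂ _
  constructor
  · intro h
    refine ⟨S ∩ progLits P₁, S ∩ progLits P₂, ?_, split_part hdisj h, ?_⟩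
    · have hS : S ⊆ progLits P₁ ∪ progLits P₂ := by
        rw [← hLU]; exact answerSet_subset_lits h
      ext a
      constructor
      · intro ha
        rcases hS ha with h1 | h2
        · exact Or.inl ⟨ha, h1⟩
        · exact Or.inr ⟨ha, h2⟩
      · rintro (⟨ha, -⟩ | ⟨ha, -⟩) <;> exact ha
    · have h' : AnswerSet (P₂ ∪ P₁) S := by rwa [Set.union_comm P₂ P₁]
      exact split_part hdisj' h'
  · rintro ⟨S₁, S₂, rfl, h₁, h₂⟩
    have hS₁ : S₁ ⊆ progLits P₁ := answerSet_subset_lits h₁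
    have hS₂ : S₂ ⊆ progLits P₂ := answerSet_subset_lits h₂
    -- reduct of P₁ w.r.t. S₁ ∪ S₂ equals reduct w.r.t. S₁, and symmetrically
    have hred₁ : glReduct P₁ (S₁ ∪ S₂) = glReduct P₁ S₁ := by
      refine reduct_congr fun r hr => ?_
      constructor <;> intro he <;> ext a <;>
        simp only [Set.mem_inter_iff, Set.mem_empty_iff_false, iff_false, not_and] <;>
        intro ha hS
      · have : a ∈ (↑r.neg ∩ (S₁ ∪ S₂) : Set Atom) := ⟨ha, Or.inl hS⟩
        rw [he] at this; exact this
      · rcases hS with h1 | h2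
        · have : a ∈ (↑r.neg ∩ S₁ : Set Atom) := ⟨ha, h1⟩
          rw [he] at this; exact this
        · exact hdis a (lits_subset hr (neg_subset_lits r ha)) (hS₂ h2)
    have hred₂ : glReduct P₂ (S₁ ∪ S₂) = glReduct P₂ S₂ := by
      refine reduct_congr fun r hr => ?_
      constructor <;> intro he <;> ext a <;>
        simp only [Set.mem_inter_iff, Set.mem_empty_iff_false, iff_false, not_and] <;>
        intro ha hS
      · have : a ∈ (↑r.neg ∩ (S₁ ∪ S₂) : Set Atom) := ⟨ha, Or.inr hS⟩
        rw [he] at this; exact this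
      · rcases hS with h1 | h2
        · exact hdis a (hS₁ h1) (lits_subset hr (neg_subset_lits r ha))
        · have : a ∈ (↑r.neg ∩ S₂ : Set Atom) := ⟨ha, h2⟩
          rw [he] at this; exact this
    constructor
    · rintro ⟨hd, B⟩ ⟨r, hr | hr, heq, hneg⟩ hB
      · obtain ⟨rfl, rfl⟩ := Prod.mk.injEq .. ▸ heq
        have hBS₁ : (↑r.pos : Set Atom) ⊆ S₁ := by
          intro a ha
          rcases hB ha with h1 | h2
          · exact h1
          · exact absurd (hS₂ h2)
              (fun h' => hdis a (lits_subset hr (pos_subset_lits r ha)) h')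
        have hrule : (r.head, r.pos) ∈ glReduct P₁ S₁ := by
          rw [← hred₁]; exact ⟨r, hr, rfl, hneg⟩
        exact Or.inl (h₁.1 _ hrule hBS₁)
      · obtain ⟨rfl, rfl⟩ := Prod.mk.injEq .. ▸ heq
        have hBS₂ : (↑r.pos : Set Atom) ⊆ S₂ := by
          intro a ha
          rcases hB ha with h1 | h2
          · exact absurd (hS₁ h1)
              (fun h' => hdis a h' (lits_subset hr (pos_subset_lits r ha)))
          · exact h2
        have hrule : (r.head, r.pos) ∈ glReduct P₂ S₂ := by
          rw [← hred₂]; exact ⟨r, hr, rfl, hneg⟩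
        exact Or.inr (h₂.1 _ hrule hBS₂)
    · intro X hX
      have hX₁ : DefClosed (glReduct P₁ S₁) X := by
        rw [← hred₁]
        rintro p ⟨r, hr, rfl, hneg⟩ hB
        exact hX _ ⟨r, Or.inl hr, rfl, hneg⟩ hB
      have hX₂ : DefClosed (glReduct P₂ S₂) X := by
        rw [← hred₂]
        rintro p ⟨r, hr, rfl, hneg⟩ hB
        exact hX _ ⟨r, Or.inr hr, rfl, hneg⟩ hB
      exact Set.union_subset (h₁.2 X hX₁) (h₂.2 X hX₂)
end

section
/- Fix indices i and k and, for each literal l, an atom x(l, i, k). For any set σ of literals, the normal logic program (with all negative bodies empty) consisting of a fact with head x(l, i, k) and empty body for each l ∈ σ, together with, for each static causal law if(l, φ) in D, a rule with head x(l, i, k) and positive body {x(l', i, k) | l' ∈ φ}, has a unique answer set, namely {x(l, i, k) | l ∈ Cl_D(σ)}. -/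
noncomputable section
attribute [local instance] Classical.propDecidable

/-- The logic program (with fixed indices `i, k` suppressed, and `x l` playing the
role of the atom `x(l, i, k)`): a fact `x l ←` for each `l ∈ σ`, and a rule
`x l ← x '' φ` for each static causal law `if(l, φ)` in `D`. All negative bodies
are empty. -/
def clProgram {F Atom : Type} [DecidableEq Atom]
    (D : Set (StaticLaw F)) (x : Lit F → Atom) (σ : Set (Lit F)) :
    Set (NRule Atom) :=
  {r | ∃ l ∈ σ, r = ⟨x l, ∅, ∅⟩} ∪
    {r | ∃ law ∈ D, r = ⟨x law.head, law.body.image x, ∅⟩}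

/-- The above program has a unique answer set, namely `{x l | l ∈ Cl_D(σ)}`. -/
theorem clProgram_unique_answer_set
    {F Atom : Type} [Finite F] [DecidableEq Atom]
    (D : Set (StaticLaw F)) (hD : D.Finite)
    (x : Lit F → Atom) (hx : Function.Injective x)
    (σ : Set (Lit F)) :
    AnswerSet (clProgram D x σ) (x '' Cl D σ) ∧
      ∀ S : Set Atom, AnswerSet (clProgram D x σ) S → S = x '' Cl D σ := by
  -- The reduct is the same for every S, since all negative bodies are empty.
  have hred : ∀ S : Set Atom, glReduct (clProgram D x σ) S =
      {p | ∃ l ∈ σ, p = (x l, (∅ : Finset Atom))} ∪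
      {p | ∃ law ∈ D, p = (x law.head, law.body.image x)} := by
    intro S
    ext p
    constructor
    · rintro ⟨r, hr, hp, -⟩
      rcases hr with ⟨l, hl, rfl⟩ | ⟨law, hlaw, rfl⟩
      · exact Or.inl ⟨l, hl, hp⟩
      · exact Or.inr ⟨law, hlaw, hp⟩
    · rintro (⟨l, hl, rfl⟩ | ⟨law, hlaw, rfl⟩)
      · exact ⟨⟨x l, ∅, ∅⟩, Or.inl ⟨l, hl, rfl⟩, rfl, by simp⟩
      · exact ⟨⟨x law.head, law.body.image x, ∅⟩, Or.inr ⟨law, hlaw, rfl⟩, rfl, by simp⟩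
  -- Cl D σ contains σ and is closed under D.
  have hsub : σ ⊆ Cl D σ := fun l hl => fun τ hτ => hτ.1 hl
  have hclosed : ClosedUnder D (Cl D σ) := by
    intro r hr hbody τ hτ
    exact hτ.2 r hr (fun l hl => hbody hl τ hτ)
  -- x '' Cl D σ is closed under the (common) reduct.
  have hXclosed : ∀ S, DefClosed (glReduct (clProgram D x σ) S) (x '' Cl D σ) := by
    intro S p hp hsup
    rw [hred S] at hp
    rcases hp with ⟨l, hl, rfl⟩ | ⟨law, hlaw, rfl⟩
    · exact ⟨l, hsub hl, rfl⟩
    · refine ⟨law.head, hclosed law hlaw ?_, rfl⟩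
      intro l hl
      have : x l ∈ x '' Cl D σ := hsup (by
        simp only [Finset.coe_image]
        exact Set.mem_image_of_mem x hl)
      rcases this with ⟨l', hl', he⟩
      rwa [← hx he]
  -- Minimality: x '' Cl D σ is contained in any set closed under the reduct.
  have hmin : ∀ S X, DefClosed (glReduct (clProgram D x σ) S) X → x '' Cl D σ ⊆ X := by
    intro S X hX
    have hτ : Cl D σ ⊆ {l | x l ∈ X} := by
      apply Set.sInter_subset_of_mem
      constructor
      · intro l hl
        exact hX (x l, ∅) (by rw [hred S]; exact Or.inl ⟨l, hl, rfl⟩) (by simp)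
      · intro r hr hbody
        refine hX (x r.head, r.body.image x) (by rw [hred S]; exact Or.inr ⟨r, hr, rfl⟩) ?_
        intro a ha
        simp only [Finset.coe_image] at ha
        rcases ha with ⟨l, hl, rfl⟩
        exact hbody hl
    rintro a ⟨l, hl, rfl⟩
    exact hτ hl
  refine ⟨⟨hXclosed _, fun X hX => hmin _ X hX⟩, ?_⟩
  intro S hS
  exact Set.Subset.antisymm (hS.2 _ (hXclosed S)) (hmin S S hS.1)

end
end
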